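/- arXiv:2603.00300 — 3 statements merged into one kernel-verified Lean document; each statement's English description precedes it below -/
import Mathlib

section
/- Suppose h, v : [0,∞) → ℝ are differentiable, h(t) ≥ h_min > 0, ḣ = v* - v, and v̇ = α(V(h) - v) + β(v* - v)/h², where V is C¹ strictly increasing, α, β > 0, and β ≥ V'(h(t))·h(t)² for all t. If at some time τ one has v(τ) = V(h(τ)) < v*, then v̇(τ) ≥ d/dt[V(h(t))]|_{t=τ} > 0; i.e., the velocity increases strictly faster than the optimal velocity at the crossing. -/
/-! At the crossing `v = V(h)` the relaxation term `α (V(h) - v)` vanishes, so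
`v̇ = β (v* - v) / h²`, while the chain rule gives `d/dt V(h) = V'(h) (v* - v)`.
Since `v* - v > 0`, the bound `V'(h) h² ≤ β` compares the two, and `V' > 0` makes the
latter positive. -/

lemma mul_le_mul_div_sq_of_mul_sq_le {a b x g : ℝ} (hx : x ≠ 0) (hab : a * x ^ 2 ≤ b)
    (hg : 0 ≤ g) : a * g ≤ b * g / x ^ 2 := by
  have hab' : a ≤ b / x ^ 2 := (le_div_iff₀ (by positivity)).2 hab
  calc a * g ≤ b / x ^ 2 * g := mul_le_mul_of_nonneg_right hab' hg
    _ = b * g / x ^ 2 := div_mul_eq_mul_div b (x ^ 2) g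

theorem stmt_9_general (V : ℝ → ℝ) (h v : ℝ → ℝ) (α β vstar hmin : ℝ)
    (hV : ContDiff ℝ 1 V) (hV' : ∀ x, 0 < deriv V x)
    (hhmin : 0 < hmin)
    (hh : Differentiable ℝ h)
    (hlow : ∀ t, 0 ≤ t → hmin ≤ h t)
    (hhd : ∀ t, 0 ≤ t → deriv h t = vstar - v t)
    (hvd : ∀ t, 0 ≤ t →
      deriv v t = α * (V (h t) - v t) + β * (vstar - v t) / (h t) ^ 2)
    (hbeta : ∀ t, 0 ≤ t → deriv V (h t) * (h t) ^ 2 ≤ β)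
    (τ : ℝ) (hτ : 0 ≤ τ) (hcross : v τ = V (h τ)) (hlt : V (h τ) < vstar) :
    deriv (fun t => V (h t)) τ ≤ deriv v τ ∧
      0 < deriv (fun t => V (h t)) τ := by
  have hgap : 0 < vstar - v τ := by linarith
  have hhτ : h τ ≠ 0 := (hhmin.trans_le (hlow τ hτ)).ne'
  have hchain : deriv (fun t => V (h t)) τ = deriv V (h τ) * (vstar - v τ) := by
    rw [← hhd τ hτ]
    exact deriv_comp τ ((hV.differentiable one_ne_zero) _) (hh τ)
  have hvτ : deriv v τ = β * (vstar - v τ) / (h τ) ^ 2 := by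
    rw [hvd τ hτ, hcross, sub_self, mul_zero, zero_add]
  rw [hchain, hvτ]
  exact ⟨mul_le_mul_div_sq_of_mul_sq_le hhτ (hbeta τ hτ) hgap.le, mul_pos (hV' _) hgap⟩

theorem stmt_9 (V : ℝ → ℝ) (h v : ℝ → ℝ) (α β vstar hmin : ℝ)
    (hV : ContDiff ℝ 1 V) (hVmono : StrictMono V) (hV' : ∀ x, 0 < deriv V x)
    (hα : 0 < α) (hβ : 0 < β) (hhmin : 0 < hmin)
    (hh : Differentiable ℝ h) (hv : Differentiable ℝ v)
    (hlow : ∀ t, 0 ≤ t → hmin ≤ h t)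
    (hhd : ∀ t, 0 ≤ t → deriv h t = vstar - v t)
    (hvd : ∀ t, 0 ≤ t →
      deriv v t = α * (V (h t) - v t) + β * (vstar - v t) / (h t) ^ 2)
    (hbeta : ∀ t, 0 ≤ t → deriv V (h t) * (h t) ^ 2 ≤ β)
    (τ : ℝ) (hτ : 0 ≤ τ) (hcross : v τ = V (h τ)) (hlt : V (h τ) < vstar) :
    deriv (fun t => V (h t)) τ ≤ deriv v τ ∧
      0 < deriv (fun t => V (h t)) τ :=
  stmt_9_general V h v α β vstar hmin hV hV' hhmin hh hlow hhd hvd hbeta τ hτ hcross hlt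
end

section
/- Suppose h, v : [0,∞) → ℝ are differentiable, ḣ = v* - v, v̇ = α(V(h) - v) + β(v* - v)/h², with V C¹ strictly increasing, α, β > 0, and β ≥ V'(h(t))·h(t)² for all t. If at some time τ one has v(τ) = V(h(τ)) > v*, then v̇(τ) ≤ d/dt[V(h(t))]|_{t=τ} < 0. -/
lemma mul_div_le_mul_of_neg {β c s x : ℝ} (hs : 0 < s) (hcs : c * s ≤ β) (hx : x < 0) :
    β * x / s ≤ c * x := by
  rw [div_le_iff₀ hs]
  calc β * x ≤ (c * s) * x := mul_le_mul_of_nonpos_right hcs hx.le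
    _ = c * x * s := by ring

theorem stmt_10_general (V : ℝ → ℝ) (h v : ℝ → ℝ) (α β vstar : ℝ)
    (hV : ContDiff ℝ 1 V) (hV' : ∀ x, 0 < deriv V x)
    (hh : Differentiable ℝ h)
    (hpos : ∀ t, 0 ≤ t → 0 < h t)
    (hhd : ∀ t, 0 ≤ t → deriv h t = vstar - v t)
    (hvd : ∀ t, 0 ≤ t →
      deriv v t = α * (V (h t) - v t) + β * (vstar - v t) / (h t) ^ 2)
    (hbeta : ∀ t, 0 ≤ t → deriv V (h t) * (h t) ^ 2 ≤ β)
    (τ : ℝ) (hτ : 0 ≤ τ) (hcross : v τ = V (h τ)) (hgt : vstar < V (h τ)) :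
    deriv v τ ≤ deriv (fun t => V (h t)) τ ∧
      deriv (fun t => V (h t)) τ < 0 := by
  have hVh : deriv (fun t => V (h t)) τ = deriv V (h τ) * (vstar - v τ) := by
    rw [← hhd τ hτ]
    exact deriv_comp τ (hV.differentiable one_ne_zero _) (hh τ)
  have hgap : vstar - v τ < 0 := by linarith
  have hvτ : deriv v τ = β * (vstar - v τ) / h τ ^ 2 := by
    rw [hvd τ hτ, hcross]
    ring
  refine ⟨?_, ?_⟩
  · rw [hvτ, hVh]
    exact mul_div_le_mul_of_neg (pow_pos (hpos τ hτ) 2) (hbeta τ hτ) hgap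
  · rw [hVh]
    exact mul_neg_of_pos_of_neg (hV' _) hgap

theorem stmt_10 (V : ℝ → ℝ) (h v : ℝ → ℝ) (α β vstar : ℝ)
    (hV : ContDiff ℝ 1 V) (hVmono : StrictMono V) (hV' : ∀ x, 0 < deriv V x)
    (hα : 0 < α) (hβ : 0 < β)
    (hh : Differentiable ℝ h) (hv : Differentiable ℝ v)
    (hpos : ∀ t, 0 ≤ t → 0 < h t)
    (hhd : ∀ t, 0 ≤ t → deriv h t = vstar - v t)
    (hvd : ∀ t, 0 ≤ t →
      deriv v t = α * (V (h t) - v t) + β * (vstar - v t) / (h t) ^ 2)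
    (hbeta : ∀ t, 0 ≤ t → deriv V (h t) * (h t) ^ 2 ≤ β)
    (τ : ℝ) (hτ : 0 ≤ τ) (hcross : v τ = V (h τ)) (hgt : vstar < V (h τ)) :
    deriv v τ ≤ deriv (fun t => V (h t)) τ ∧
      deriv (fun t => V (h t)) τ < 0 :=
  stmt_10_general V h v α β vstar hV hV' hh hpos hhd hvd hbeta τ hτ hcross hgt
end

section
/- Let V be C¹ with V' > 0, let v* ∈ ℝ, and suppose (v(t), V(h(t))) lies in A ∪ D ∪ {(v*,v*)} for all t ≥ 0, where A = {v* > v > V} and D = {V > v > v*}, with ḣ = v* - v and h > 0. Then the energy E(t) = (1/2)(V(h(t)) - v*)² is non-increasing: Ė(t) ≤ -V'(h(t))·(v(t) - v*)² ≤ 0 for all t. -/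
/-! Along the flow, `Ė = V'(h) (V(h) - v*) (v* - v)`. Splitting `V(h) - v* = (V(h) - v) + (v - v*)`
gives `Ė = V'(h) (v - V(h)) (v - v*) - V'(h) (v - v*)²`, and in each of the regions `A`, `D` and
the equilibrium the first term is nonpositive because `v` lies between `V(h)` and `v*`. -/

theorem hasDerivAt_half_sq_sub_comp {V h : ℝ → ℝ} {c t : ℝ}
    (hV : DifferentiableAt ℝ V (h t)) (hh : DifferentiableAt ℝ h t) :
    HasDerivAt (fun s => 1 / 2 * (V (h s) - c) ^ 2)
      ((V (h t) - c) * (deriv V (h t) * deriv h t)) t := by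
  have hVh : HasDerivAt (fun s => V (h s)) (deriv V (h t) * deriv h t) t :=
    hV.hasDerivAt.comp t hh.hasDerivAt
  exact (((hVh.sub_const c).fun_pow 2).const_mul (1 / 2 : ℝ)).congr_deriv (by ring)

theorem sub_mul_sub_nonpos_of_between {x y c : ℝ}
    (hxy : (y < x ∧ x < c) ∨ (c < x ∧ x < y) ∨ (x = c ∧ y = c)) :
    (x - y) * (x - c) ≤ 0 := by
  rcases hxy with ⟨hyx, hxc⟩ | ⟨hcx, hxy'⟩ | ⟨rfl, -⟩
  · exact mul_nonpos_of_nonneg_of_nonpos (by linarith) (by linarith)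
  · exact mul_nonpos_of_nonpos_of_nonneg (by linarith) (by linarith)
  · simp

theorem energy_rate_le {a x y c : ℝ} (ha : 0 ≤ a) (hxy : (x - y) * (x - c) ≤ 0) :
    (y - c) * (a * (c - x)) ≤ -a * (x - c) ^ 2 := by
  have split : (y - c) * (a * (c - x)) = a * ((x - y) * (x - c)) - a * (x - c) ^ 2 := by ring
  rw [split]
  linarith [mul_nonpos_of_nonneg_of_nonpos ha hxy]

theorem stmt_14_general (V : ℝ → ℝ) (h v : ℝ → ℝ) (vstar : ℝ)
    (hV : ContDiff ℝ 1 V) (hV' : ∀ x, 0 < deriv V x)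
    (hh : Differentiable ℝ h)
    (hhd : ∀ t, 0 ≤ t → deriv h t = vstar - v t)
    (hregion : ∀ t, 0 ≤ t →
      (V (h t) < v t ∧ v t < vstar) ∨ (vstar < v t ∧ v t < V (h t)) ∨
        (v t = vstar ∧ V (h t) = vstar))
    (E : ℝ → ℝ) (hE : ∀ t, E t = (1 / 2) * (V (h t) - vstar) ^ 2) :
    ∀ t, 0 ≤ t →
      deriv E t ≤ -deriv V (h t) * (v t - vstar) ^ 2 ∧
        -deriv V (h t) * (v t - vstar) ^ 2 ≤ 0 := by
  intro t ht
  have hEd : deriv E t = (V (h t) - vstar) * (deriv V (h t) * (vstar - v t)) := by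
    rw [funext hE, ← hhd t ht]
    exact (hasDerivAt_half_sq_sub_comp (hV.differentiable one_ne_zero _) (hh t)).deriv
  refine ⟨hEd ▸ energy_rate_le (hV' _).le (sub_mul_sub_nonpos_of_between (hregion t ht)), ?_⟩
  exact mul_nonpos_of_nonpos_of_nonneg (neg_nonpos.mpr (hV' _).le) (sq_nonneg _)

theorem stmt_14 (V : ℝ → ℝ) (h v : ℝ → ℝ) (vstar : ℝ)
    (hV : ContDiff ℝ 1 V) (hV' : ∀ x, 0 < deriv V x)
    (hh : Differentiable ℝ h) (hv : Differentiable ℝ v)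
    (hpos : ∀ t, 0 ≤ t → 0 < h t)
    (hhd : ∀ t, 0 ≤ t → deriv h t = vstar - v t)
    (hregion : ∀ t, 0 ≤ t →
      (V (h t) < v t ∧ v t < vstar) ∨ (vstar < v t ∧ v t < V (h t)) ∨
        (v t = vstar ∧ V (h t) = vstar))
    (E : ℝ → ℝ) (hE : ∀ t, E t = (1 / 2) * (V (h t) - vstar) ^ 2) :
    ∀ t, 0 ≤ t →
      deriv E t ≤ -deriv V (h t) * (v t - vstar) ^ 2 ∧
        -deriv V (h t) * (v t - vstar) ^ 2 ≤ 0 :=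
  stmt_14_general V h v vstar hV hV' hh hhd hregion E hE
end
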